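/- The function x ↦ λ(x) is increasing on [2,∞), i.e. for all 2 ≤ x ≤ x' one has λ(x) ≤ λ(x'). -/

import Mathlib

open MeasureTheory Real Set Filter Topology

/-- The integrand of `lam`, with its continuous extension `x(x-1)/2` at `p = 0`. -/
noncomputable def lamInt (x p : ℝ) : ℝ :=
  if p = 0 then x * (x - 1) / 2
  else (1 - (1 - p) ^ x - x * p * (1 - p) ^ (x - 1)) / p ^ 2

/-- The total jump rate function `λ(x)` of the `Λ`-coalescent. -/
noncomputable def lam (Λ : Measure ℝ) (x : ℝ) : ℝ :=
  ∫ p in Set.Icc (0:ℝ) 1, lamInt x p ∂Λ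

/-!
For fixed `p`, `lamNum x p` is nondecreasing in `x ≥ 1`: its `x`-derivative
`(1-p)^(x-1) (-(1 - p + x p) log (1-p) - p)` is nonnegative since `-log (1-p) ≥ p` and
`1 - p + x p ≥ 1`. So the integrand is pointwise nondecreasing in `x`. It is also bounded by
`x(x-1)/2` on `[0, 1]`, which gives integrability: `lamNum x` vanishes at `0` and its `p`-derivative
`x(x-1) p (1-p)^(x-2)` lies between `0` and `x(x-1) p`.
-/

/-- For integer `x`, the probability of at least two successes in `x` Bernoulli(`p`) trials. -/
noncomputable def lamNum (x p : ℝ) : ℝ :=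
  1 - (1 - p) ^ x - x * p * (1 - p) ^ (x - 1)

lemma lamInt_zero (x : ℝ) : lamInt x 0 = x * (x - 1) / 2 :=
  if_pos rfl

lemma lamInt_of_ne_zero (x : ℝ) {p : ℝ} (hp : p ≠ 0) : lamInt x p = lamNum x p / p ^ 2 :=
  if_neg hp

lemma lamNum_zero (x : ℝ) : lamNum x 0 = 0 := by
  simp [lamNum]

lemma lamNum_one_of_one_lt {x : ℝ} (hx : 1 < x) : lamNum x 1 = 1 := by
  rw [lamNum, sub_self, zero_rpow (by linarith), zero_rpow (by linarith)]
  ring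

lemma lamNum_one_le {x : ℝ} (hx : 1 ≤ x) : lamNum x 1 ≤ 1 := by
  rw [lamNum, sub_self, zero_rpow (by linarith)]
  linarith [mul_nonneg (by linarith : 0 ≤ x * 1) (rpow_nonneg le_rfl (x - 1))]

lemma monotoneOn_of_hasDerivAt_nonneg {D : Set ℝ} (hD : Convex ℝ D) {f f' : ℝ → ℝ}
    (hf : ∀ t, HasDerivAt f (f' t) t) (hf' : ∀ t ∈ interior D, 0 ≤ f' t) : MonotoneOn f D :=
  monotoneOn_of_hasDerivWithinAt_nonneg hD (fun t _ => (hf t).continuousAt.continuousWithinAt)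
    (fun t _ => (hf t).hasDerivWithinAt) hf'

lemma hasDerivAt_lamNum {x : ℝ} (hx : 2 ≤ x) (p : ℝ) :
    HasDerivAt (lamNum x) (x * (x - 1) * p * (1 - p) ^ (x - 2)) p := by
  have hq : HasDerivAt (fun p : ℝ => 1 - p) (-1) p := (hasDerivAt_id p).const_sub 1
  have h1 := hq.rpow_const (p := x) (Or.inr (by linarith))
  have h2 := hq.rpow_const (p := x - 1) (Or.inr (by linarith))
  refine ((h1.const_sub 1).sub (((hasDerivAt_id' p).const_mul x).mul h2)).congr_deriv ?_
  rw [show x - 1 - 1 = x - 2 by ring]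
  ring

lemma lamNum_nonneg {x p : ℝ} (hx : 2 ≤ x) (hp : p ∈ Icc (0:ℝ) 1) : 0 ≤ lamNum x p := by
  have hmono : MonotoneOn (lamNum x) (Icc 0 1) := by
    refine monotoneOn_of_hasDerivAt_nonneg (convex_Icc 0 1) (hasDerivAt_lamNum hx) fun t ht => ?_
    rw [interior_Icc] at ht
    exact mul_nonneg (mul_nonneg (by nlinarith) ht.1.le) (rpow_nonneg (by linarith [ht.2]) _)
  simpa [lamNum_zero] using hmono (left_mem_Icc.2 zero_le_one) hp hp.1

lemma lamNum_le {x p : ℝ} (hx : 2 ≤ x) (hp : p ∈ Icc (0:ℝ) 1) :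
    lamNum x p ≤ x * (x - 1) / 2 * p ^ 2 := by
  have hder : ∀ t, HasDerivAt (fun t => x * (x - 1) / 2 * t ^ 2 - lamNum x t)
      (x * (x - 1) * t * (1 - (1 - t) ^ (x - 2))) t := fun t =>
    (((hasDerivAt_pow 2 t).const_mul (x * (x - 1) / 2)).sub
      (hasDerivAt_lamNum hx t)).congr_deriv (by push_cast; ring)
  have hmono : MonotoneOn (fun t => x * (x - 1) / 2 * t ^ 2 - lamNum x t) (Icc 0 1) := by
    refine monotoneOn_of_hasDerivAt_nonneg (convex_Icc 0 1) hder fun t ht => ?_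
    rw [interior_Icc] at ht
    have : (1 - t) ^ (x - 2) ≤ 1 :=
      rpow_le_one (by linarith [ht.2]) (by linarith [ht.1]) (by linarith)
    exact mul_nonneg (mul_nonneg (by nlinarith) ht.1.le) (by linarith)
  have := hmono (left_mem_Icc.2 zero_le_one) hp hp.1
  simp only [lamNum_zero] at this
  linarith

lemma hasDerivAt_lamNum_exponent {p : ℝ} (hp : p < 1) (x : ℝ) :
    HasDerivAt (lamNum · p) ((1 - p) ^ (x - 1) * (-(1 - p + x * p) * log (1 - p) - p)) x := by
  have hq : 0 < 1 - p := by linarith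
  have h1 := (hasDerivAt_id' x).const_rpow hq
  have h2 := ((hasDerivAt_id' x).sub_const 1).const_rpow hq
  refine ((h1.const_sub 1).sub ((hasDerivAt_mul_const p).mul h2)).congr_deriv ?_
  have hx : (1 - p) ^ x = (1 - p) ^ (x - 1) * (1 - p) := by
    rw [rpow_sub_one hq.ne']; field_simp
  simp only [hx]
  ring

lemma monotoneOn_lamNum_exponent {p : ℝ} (hp : p ∈ Ico (0:ℝ) 1) :
    MonotoneOn (lamNum · p) (Ici 1) := by
  refine monotoneOn_of_hasDerivAt_nonneg (convex_Ici 1) (hasDerivAt_lamNum_exponent hp.2)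
    fun x hx => mul_nonneg (rpow_nonneg (by linarith [hp.2]) _) ?_
  rw [interior_Ici] at hx
  have hlog : log (1 - p) ≤ -p := by
    linarith [log_le_sub_one_of_pos (by linarith [hp.2] : 0 < 1 - p)]
  have hxp : 0 ≤ (x - 1) * p * -log (1 - p) :=
    mul_nonneg (mul_nonneg (by linarith [mem_Ioi.1 hx]) hp.1) (by linarith [hp.1])
  nlinarith

lemma monotoneOn_lamInt_exponent {p : ℝ} (hp : p ∈ Icc (0:ℝ) 1) :
    MonotoneOn (lamInt · p) (Ici 1) := by
  intro a ha b hb hab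
  rcases eq_or_ne p 0 with rfl | hp0
  · simp only [lamInt_zero]
    nlinarith [mem_Ici.1 ha]
  simp only [lamInt_of_ne_zero _ hp0]
  refine div_le_div_of_nonneg_right ?_ (sq_nonneg p)
  rcases hp.2.lt_or_eq with hp1 | rfl
  · exact monotoneOn_lamNum_exponent ⟨hp.1, hp1⟩ ha hb hab
  rcases hab.eq_or_lt with rfl | hlt
  · rfl
  rw [lamNum_one_of_one_lt (lt_of_le_of_lt (mem_Ici.1 ha) hlt)]
  exact lamNum_one_le ha

lemma lamInt_mem_Icc {x p : ℝ} (hx : 2 ≤ x) (hp : p ∈ Icc (0:ℝ) 1) :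
    lamInt x p ∈ Icc 0 (x * (x - 1) / 2) := by
  rcases eq_or_ne p 0 with rfl | hp0
  · exact ⟨by rw [lamInt_zero]; nlinarith, (lamInt_zero x).le⟩
  rw [lamInt_of_ne_zero _ hp0]
  have hp2 : 0 < p ^ 2 := by positivity
  exact ⟨div_nonneg (lamNum_nonneg hx hp) hp2.le, (div_le_iff₀ hp2).2 (lamNum_le hx hp)⟩

lemma measurable_lamInt (x : ℝ) : Measurable (lamInt x) :=
  Measurable.ite (measurableSet_singleton 0) measurable_const (by fun_prop)

lemma integrableOn_lamInt (Λ : Measure ℝ) [IsFiniteMeasure Λ] {x : ℝ} (hx : 2 ≤ x) :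
    IntegrableOn (lamInt x) (Icc 0 1) Λ := by
  refine Measure.integrableOn_of_bounded (M := x * (x - 1) / 2) (measure_ne_top Λ _)
    (measurable_lamInt x).aestronglyMeasurable (ae_restrict_of_forall_mem measurableSet_Icc ?_)
  intro p hp
  obtain ⟨h0, h1⟩ := lamInt_mem_Icc hx hp
  rwa [norm_of_nonneg h0]

theorem lam_increasing (Λ : Measure ℝ) [IsFiniteMeasure Λ] :
    ∀ x x' : ℝ, 2 ≤ x → x ≤ x' → lam Λ x ≤ lam Λ x' := by
  intro x x' hx hxx'
  refine setIntegral_mono_on (integrableOn_lamInt Λ hx)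
    (integrableOn_lamInt Λ (hx.trans hxx')) measurableSet_Icc fun p hp => ?_
  exact monotoneOn_lamInt_exponent hp (mem_Ici.2 (by linarith)) (mem_Ici.2 (by linarith)) hxx'
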